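/- Let N ⊆ M ⊆ B(H). If every automorphism θ of the commutant N′ that fixes M′ pointwise must fix N′ pointwise, then N is completely singular in M: for any Hilbert space K and any unitary U ∈ M ⊗̄ B(K) with U(N ⊗̄ B(K))U* = N ⊗̄ B(K), we have U ∈ N ⊗̄ B(K). -/

import Mathlib

open TopologicalSpace

noncomputable section

namespace VNPaper

variable {H : Type*} [NormedAddCommGroup H] [InnerProductSpace ℂ H] [CompleteSpace H]

/-- A unitary operator on `H`. -/
def IsUnitaryOp (U : H →L[ℂ] H) : Prop := U * star U = 1 ∧ star U * U = 1

/-- Image of a set of operators under conjugation `x ↦ U x U*`. -/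
def conjSet (U : H →L[ℂ] H) (S : Set (H →L[ℂ] H)) : Set (H →L[ℂ] H) :=
  (fun x => U * x * star U) '' S

/-- `N` is singular in `M`: the only unitaries of `M` normalizing `N` lie in `N`. -/
def SingularIn (N M : Set (H →L[ℂ] H)) : Prop :=
  ∀ U ∈ M, IsUnitaryOp U → conjSet U N = N → U ∈ N

/-- The unitary normalizer of `N` in `M`. -/
def normalizerSet (N M : Set (H →L[ℂ] H)) : Set (H →L[ℂ] H) :=
  {U | U ∈ M ∧ IsUnitaryOp U ∧ conjSet U N = N}

/-- Partial isometry. -/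
def IsPartialIsom (V : H →L[ℂ] H) : Prop := V * star V * V = V

/-- Projection (self-adjoint idempotent). -/
def IsProjOp (p : H →L[ℂ] H) : Prop := IsSelfAdjoint p ∧ p * p = p

/-- Compression `E S E` of a set of operators. -/
def compress (E : H →L[ℂ] H) (S : Set (H →L[ℂ] H)) : Set (H →L[ℂ] H) :=
  (fun x => E * x * E) '' S

/-- The normalizing groupoid of `N` in `M`: partial isometries `V ∈ M` with initial and final
projections `E, F ∈ N` such that `V (E N E) V* = F N F`. -/
def groupoidSet (N M : Set (H →L[ℂ] H)) : Set (H →L[ℂ] H) :=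
  {V | V ∈ M ∧ IsPartialIsom V ∧ star V * V ∈ N ∧ V * star V ∈ N ∧
    conjSet V (compress (star V * V) N) = compress (V * star V) N}

/-- The von Neumann algebra generated by a set of operators (double commutant). -/
def gen (S : Set (H →L[ℂ] H)) : Set (H →L[ℂ] H) :=
  Set.centralizer (Set.centralizer S)

/-- `N` is regular in `M`: the normalizer of `N` in `M` generates `M`. -/
def RegularIn (N M : Set (H →L[ℂ] H)) : Prop :=
  gen (normalizerSet N M) = M

/-- The Hilbert space `ℓ²(ι, H) = H ⊗ ℓ²(ι)`. -/
abbrev l2 (ι : Type*) (H : Type*) [NormedAddCommGroup H] [InnerProductSpace ℂ H] :=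
  lp (fun _ : ι => H) 2

/-- The `(i,j)` matrix entry of an operator on `ℓ²(ι, H)`. -/
def entry {ι : Type*} (T : l2 ι H →L[ℂ] l2 ι H) (i j : ι) : H →L[ℂ] H :=
  letI : DecidableEq ι := Classical.decEq ι
  LinearMap.mkContinuous
    { toFun := fun h => T (lp.single 2 j h) i
      map_add' := fun a b => by
        have hs : lp.single (E := fun _ : ι => H) 2 j (a + b)
            = lp.single 2 j a + lp.single 2 j b := by
          apply lp.ext
          funext k
          by_cases hk : k = j
          · subst hk
            simp [lp.single_apply_self]
          · simp [lp.single_apply_ne _ _ _ hk]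
        dsimp only
        rw [hs, map_add]
        rfl
      map_smul' := fun c a => by
        dsimp only
        rw [show lp.single (E := fun _ : ι => H) 2 j (c • a) = c • lp.single 2 j a from
          lp.single_smul (E := fun _ : ι => H) 2 j c a, map_smul]
        rfl }
    ‖T‖
    (fun h => by
      calc ‖T (lp.single 2 j h) i‖ ≤ ‖T (lp.single 2 j h)‖ :=
            lp.norm_apply_le_norm (by norm_num) _ i
        _ ≤ ‖T‖ * ‖lp.single (E := fun _ : ι => H) 2 j h‖ := T.le_opNorm _
        _ = ‖T‖ * ‖h‖ := by
            rw [show ‖lp.single (E := fun _ : ι => H) 2 j h‖ = ‖h‖ from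
              lp.norm_single (E := fun _ : ι => H) (p := 2) (by norm_num) j h])

/-- The model of `S ⊗̄ B(ℓ²(ι))` inside `B(ℓ²(ι, H))`: operators all of whose matrix
entries lie in `S`. -/
def tensorB (S : Set (H →L[ℂ] H)) (ι : Type*) : Set (l2 ι H →L[ℂ] l2 ι H) :=
  {T | ∀ i j, entry T i j ∈ S}

/-- `N` is completely singular in `M`: `N ⊗̄ B(K)` is singular in `M ⊗̄ B(K)` for every
Hilbert space `K` (modelled as `ℓ²(ι)` over all index types `ι`). -/
def CompletelySingularIn (N M : Set (H →L[ℂ] H)) : Prop :=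
  ∀ ι : Type, SingularIn (tensorB N ι) (tensorB M ι)

/-- A finite von Neumann algebra: every isometry in it is a unitary. -/
def IsFiniteVN (M : Set (H →L[ℂ] H)) : Prop :=
  ∀ V ∈ M, star V * V = 1 → V * star V = 1

/-- A factor: trivial center. -/
def IsFactorVN (M : Set (H →L[ℂ] H)) : Prop :=
  ∀ x ∈ M, (∀ y ∈ M, x * y = y * x) → ∃ c : ℂ, x = c • (1 : H →L[ℂ] H)

/-- Abelian set of operators. -/
def IsAbelianSet (S : Set (H →L[ℂ] H)) : Prop :=
  ∀ x ∈ S, ∀ y ∈ S, x * y = y * x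

/-- A type II₁ factor: an infinite-dimensional finite factor. -/
def IsII1Factor (M : VonNeumannAlgebra H) : Prop :=
  IsFiniteVN (M : Set (H →L[ℂ] H)) ∧ IsFactorVN (M : Set (H →L[ℂ] H)) ∧
    ¬ ∃ (s : Finset (H →L[ℂ] H)), (↑s ⊆ (M : Set (H →L[ℂ] H))) ∧
        ∀ x ∈ (M : Set (H →L[ℂ] H)), x ∈ Submodule.span ℂ (↑s : Set (H →L[ℂ] H))

/-- Countably decomposable: every orthogonal family of nonzero projections is countable. -/
def CountablyDecomposable (N : Set (H →L[ℂ] H)) : Prop :=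
  ∀ S : Set (H →L[ℂ] H), (∀ p ∈ S, p ∈ N ∧ IsProjOp p ∧ p ≠ 0) →
    (S.Pairwise fun p q => p * q = 0) → S.Countable

/-- Properly infinite: every nonzero central projection `z` of `N` is infinite, i.e. `z` is
Murray–von Neumann equivalent in `N` to a proper subprojection of itself. -/
def ProperlyInfinite (N : Set (H →L[ℂ] H)) : Prop :=
  ∀ z ∈ N, IsProjOp z → z ≠ 0 → (∀ y ∈ N, z * y = y * z) →
    ∃ v ∈ N, star v * v = z ∧ z * v = v ∧ v * star v ≠ z

/-- Basic-neighbourhood description of the strong-operator closure of a set of operators. -/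
def sotClosure (S : Set (H →L[ℂ] H)) : Set (H →L[ℂ] H) :=
  {T | ∀ ε : ℝ, 0 < ε → ∀ F : Finset H, ∃ X ∈ S, ∀ h ∈ F, ‖(T - X) h‖ < ε}

/-- `E` is the projection onto the closure of the range of `A`: the smallest projection `p`
with `p A = A`. -/
def IsRangeProjOf (E A : H →L[ℂ] H) : Prop :=
  IsProjOp E ∧ E * A = A ∧ ∀ p, IsProjOp p → p * A = A → (p - E).IsPositive

/-- `A = V P` is the polar decomposition of `A`: `P = (A* A)^{1/2} ≥ 0`, `V` a partial isometry
whose initial projection `V* V` is the range projection of `P`. -/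
def IsPolarDecomp (A V P : H →L[ℂ] H) : Prop :=
  A = V * P ∧ P.IsPositive ∧ P * P = star A * A ∧ IsPartialIsom V ∧
    IsRangeProjOf (star V * V) P

/-- An injective von Neumann algebra: the range of a norm-one idempotent (conditional
expectation) on `B(H)`. -/
def IsInjectiveVN (B : Set (H →L[ℂ] H)) : Prop :=
  ∃ Φ : (H →L[ℂ] H) →L[ℂ] (H →L[ℂ] H), ‖Φ‖ ≤ 1 ∧ (∀ x, Φ x ∈ B) ∧ ∀ x ∈ B, Φ x = x

end VNPaper

/-- Data realizing the spatial tensor product of operators on `H₁` and `H₂` on a Hilbert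
space `HT`: commuting embeddings `x ↦ x ⊗ 1`, `y ↦ 1 ⊗ y`, satisfying the commutation
theorem for generated von Neumann algebras. -/
structure VNTensorData (H₁ : Type*) (H₂ : Type*) (HT : Type*)
    [NormedAddCommGroup H₁] [InnerProductSpace ℂ H₁] [CompleteSpace H₁]
    [NormedAddCommGroup H₂] [InnerProductSpace ℂ H₂] [CompleteSpace H₂]
    [NormedAddCommGroup HT] [InnerProductSpace ℂ HT] [CompleteSpace HT] where
  e₁ : (H₁ →L[ℂ] H₁) →⋆ₐ[ℂ] (HT →L[ℂ] HT)
  e₂ : (H₂ →L[ℂ] H₂) →⋆ₐ[ℂ] (HT →L[ℂ] HT)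
  injective_e₁ : Function.Injective e₁
  injective_e₂ : Function.Injective e₂
  commute : ∀ x y, e₁ x * e₂ y = e₂ y * e₁ x
  commutation : ∀ (S₁ : Set (H₁ →L[ℂ] H₁)) (S₂ : Set (H₂ →L[ℂ] H₂)),
    Set.centralizer (e₁ '' S₁ ∪ e₂ '' S₂) =
      VNPaper.gen (e₁ '' Set.centralizer S₁ ∪ e₂ '' Set.centralizer S₂)

namespace VNTensorData

variable {H₁ H₂ HT : Type*}
    [NormedAddCommGroup H₁] [InnerProductSpace ℂ H₁] [CompleteSpace H₁]
    [NormedAddCommGroup H₂] [InnerProductSpace ℂ H₂] [CompleteSpace H₂]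
    [NormedAddCommGroup HT] [InnerProductSpace ℂ HT] [CompleteSpace HT]

/-- The von Neumann tensor product `S₁ ⊗̄ S₂` realized on `HT`. -/
def prod (D : VNTensorData H₁ H₂ HT) (S₁ : Set (H₁ →L[ℂ] H₁)) (S₂ : Set (H₂ →L[ℂ] H₂)) :
    Set (HT →L[ℂ] HT) :=
  VNPaper.gen (D.e₁ '' S₁ ∪ D.e₂ '' S₂)

end VNTensorData

/-! On `ℓ²(ι, H) = H ⊗ ℓ²(ι)` the commutation theorem reduces to matrix computations: an
operator commuting with `N ⊗̄ B(K)` commutes with the matrix units, so it is some `t ⊗ 1`, and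
with `N ⊗ 1`, so `t ∈ N′`; an operator commuting with `N′ ⊗ 1` has all its entries in `N″ = N`.
Hence a unitary `U` normalizing `N ⊗̄ B(K)` normalizes `N′ ⊗ 1 ≅ N′`, and conjugation by `U`
induces an automorphism `θ` of `N′`. If `U ∈ M ⊗̄ B(K)`, then `U` commutes with `M′ ⊗ 1`, so `θ`
fixes `M′`; hence `θ` is the identity, `U` commutes with `N′ ⊗ 1`, and `U ∈ N ⊗̄ B(K)`. -/

section Automorphisms

variable {R B : Type*} [CommSemiring R] [StarRing R] [Semiring B] [Algebra R B] [StarRing B]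
  [StarModule R B]

def StarAlgEquiv.restrict (σ : B ≃⋆ₐ[R] B) (S : StarSubalgebra R B)
    (hS : ∀ b, σ b ∈ S ↔ b ∈ S) : S ≃⋆ₐ[R] S where
  toFun x := ⟨σ x, (hS x).2 x.2⟩
  invFun x := ⟨σ.symm x, (hS _).1 (by simp)⟩
  left_inv x := Subtype.ext (σ.symm_apply_apply x)
  right_inv x := Subtype.ext (σ.apply_symm_apply x)
  map_mul' x y := Subtype.ext (map_mul σ (x : B) y)
  map_add' x y := Subtype.ext (map_add σ (x : B) y)
  map_smul' c x := Subtype.ext (map_smul σ c (x : B))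
  map_star' x := Subtype.ext (map_star σ (x : B))

theorem StarAlgEquiv.exists_lift_of_range_invariant {A : Type*} [Semiring A] [Algebra R A]
    [StarRing A] [StarModule R A] (φ : A →⋆ₐ[R] B) (hφ : Function.Injective φ)
    (σ : B ≃⋆ₐ[R] B) (hσ : ∀ b, σ b ∈ φ.range ↔ b ∈ φ.range) :
    ∃ θ : A ≃⋆ₐ[R] A, ∀ a, φ (θ a) = σ (φ a) := by
  let e := StarAlgEquiv.ofInjective φ hφ
  refine ⟨(e.trans (σ.restrict φ.range hσ)).trans e.symm, fun a => ?_⟩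
  show ((e (e.symm _) : φ.range) : B) = _
  rw [e.apply_symm_apply]
  rfl

end Automorphisms

theorem Set.apply_mem_centralizer_iff {M F : Type*} [Mul M] [EquivLike F M M]
    [MulEquivClass F M M] (σ : F) {S : Set M} (hS : σ '' S = S) {b : M} :
    σ b ∈ S.centralizer ↔ b ∈ S.centralizer := by
  conv_lhs => rw [← hS]
  simp only [Set.mem_centralizer_iff, Set.forall_mem_image, ← map_mul,
    (EquivLike.injective σ).eq_iff]

theorem Unitary.conjStarAlgAut_apply_eq_self_iff {S R : Type*} [Semiring R] [StarMul R]
    [SMul S R] [IsScalarTower S R R] [SMulCommClass S R R] (u : unitary R) (x : R) :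
    conjStarAlgAut S R u x = x ↔ Commute (u : R) x := by
  rw [conjStarAlgAut_apply]
  refine ⟨fun h => ?_, fun h => by rw [h.eq, mul_assoc, Unitary.mul_star_self_of_mem u.2, mul_one]⟩
  calc (u : R) * x = u * x * star (u : R) * u := by
        rw [mul_assoc _ (star (u : R)), Unitary.star_mul_self_of_mem u.2, mul_one]
    _ = x * u := by rw [h]

namespace VNPaper

open scoped Classical

variable {H : Type*} [NormedAddCommGroup H] [InnerProductSpace ℂ H] {ι : Type*}

def amplCLM (x : H →L[ℂ] H) : l2 ι H →L[ℂ] l2 ι H :=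
  LinearMap.mkContinuous
    { toFun := fun f => ⟨fun i => x (f i),
        ((lp.memℓp f).const_smul (‖x‖ : ℂ)).mono' fun i => by
          simpa [norm_smul] using x.le_opNorm (f i)⟩
      map_add' := fun f g => lp.ext <| funext fun i => map_add x (f i) (g i)
      map_smul' := fun c f => lp.ext <| funext fun i => map_smul x c (f i) }
    ‖x‖ fun f =>
      (lp.norm_mono two_ne_zero (y := (‖x‖ : ℂ) • f) fun i => by
        change ‖x (f i)‖ ≤ ‖(‖x‖ : ℂ) • f i‖
        rw [norm_smul, Complex.norm_real, norm_norm]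
        exact x.le_opNorm (f i)).trans_eq <| by
          rw [lp.norm_const_smul two_ne_zero, Complex.norm_real, norm_norm]

@[simp]
theorem amplCLM_apply (x : H →L[ℂ] H) (f : l2 ι H) (i : ι) : amplCLM x f i = x (f i) := rfl

theorem entry_apply (T : l2 ι H →L[ℂ] l2 ι H) (i j : ι) (a : H) :
    entry T i j a = T (lp.single 2 j a) i := rfl

theorem ext_entry {T S : l2 ι H →L[ℂ] l2 ι H} (h : ∀ i j, entry T i j = entry S i j) :
    T = S := by
  refine ContinuousLinearMap.ext fun f => ?_
  have hT := (lp.hasSum_single ENNReal.ofNat_ne_top f).mapL T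
  have hS := (lp.hasSum_single ENNReal.ofNat_ne_top f).mapL S
  refine hT.unique (hS.congr_fun fun j => lp.ext <| funext fun i => ?_)
  exact DFunLike.congr_fun (h i j) (f j)

/-- The matrix unit `1 ⊗ e_{kl}` on `ℓ²(ι, H) = H ⊗ ℓ²(ι)`. -/
def matrixUnit (k l : ι) : l2 ι H →L[ℂ] l2 ι H :=
  (lp.singleContinuousLinearMap ℂ (fun _ => H) 2 k).comp (lp.evalCLM ℂ (fun _ => H) 2 l)

theorem matrixUnit_apply (k l : ι) (f : l2 ι H) :
    matrixUnit k l f = lp.single 2 k (f l) := rfl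

theorem entry_matrixUnit (k l i j : ι) :
    entry (matrixUnit k l : l2 ι H →L[ℂ] l2 ι H) i j = if i = k ∧ j = l then 1 else 0 := by
  ext a
  simp only [entry_apply, matrixUnit_apply, lp.single_apply, Pi.single_apply]
  split_ifs <;> simp_all

theorem entry_eq_of_commute_matrixUnit {T : l2 ι H →L[ℂ] l2 ι H} {k l : ι}
    (h : Commute (matrixUnit k l) T) (i : ι) :
    entry T i k = if i = k then entry T l l else 0 := by
  ext a
  have := congrArg (fun S => S (lp.single 2 l a) i) h.eq
  change (lp.single 2 k (T (lp.single 2 l a) l) : l2 ι H) i =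
    T (lp.single 2 k ((lp.single 2 l a : l2 ι H) l)) i at this
  rw [lp.single_apply_self] at this
  rw [entry_apply, ← this, lp.single_apply, Pi.single_apply]
  split_ifs <;> rfl

section Amplification

variable [CompleteSpace H]

theorem star_amplCLM (x : H →L[ℂ] H) :
    star (amplCLM x : l2 ι H →L[ℂ] l2 ι H) = amplCLM (star x) := by
  refine ((ContinuousLinearMap.eq_adjoint_iff _ _).2 fun f g => ?_).symm
  simp only [lp.inner_eq_tsum, amplCLM_apply, ContinuousLinearMap.star_eq_adjoint,
    ContinuousLinearMap.adjoint_inner_left]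

variable (H ι) in
/-- The amplification `x ↦ x ⊗ 1` of `B(H)` into `B(H ⊗ ℓ²(ι))`. -/
def ampl : (H →L[ℂ] H) →⋆ₐ[ℂ] (l2 ι H →L[ℂ] l2 ι H) where
  toFun := amplCLM
  map_one' := rfl
  map_mul' _ _ := rfl
  map_zero' := rfl
  map_add' _ _ := rfl
  commutes' _ := rfl
  map_star' x := (star_amplCLM x).symm

@[simp]
theorem ampl_apply (x : H →L[ℂ] H) (f : l2 ι H) (i : ι) :
    ampl H ι x f i = x (f i) := rfl

theorem ampl_single (x : H →L[ℂ] H) (j : ι) (a : H) :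
    ampl H ι x (lp.single 2 j a) = lp.single 2 j (x a) :=
  lp.ext <| funext fun i => by
    simp only [ampl_apply, lp.single_apply, Pi.single_apply]
    split_ifs <;> simp

theorem entry_ampl (x : H →L[ℂ] H) (i j : ι) :
    entry (ampl H ι x) i j = if i = j then x else 0 := by
  ext a
  simp only [entry_apply, ampl_single, lp.single_apply, Pi.single_apply]
  split_ifs <;> simp

theorem entry_ampl_mul (y : H →L[ℂ] H) (T : l2 ι H →L[ℂ] l2 ι H) (i j : ι) :
    entry (ampl H ι y * T) i j = y * entry T i j := rfl

theorem entry_mul_ampl (T : l2 ι H →L[ℂ] l2 ι H) (y : H →L[ℂ] H) (i j : ι) :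
    entry (T * ampl H ι y) i j = entry T i j * y := by
  ext a
  exact congrArg (T · i) (ampl_single y j a)

theorem ampl_injective [Nonempty ι] : Function.Injective (ampl H ι) := fun x y h => by
  have i : ι := Classical.arbitrary ι
  simpa [entry_ampl] using congrArg (entry · i i) h

theorem commute_ampl_iff {y : H →L[ℂ] H} {T : l2 ι H →L[ℂ] l2 ι H} :
    Commute (ampl H ι y) T ↔ ∀ i j, Commute y (entry T i j) := by
  refine ⟨fun h i j => ?_, fun h => ext_entry fun i j => ?_⟩
  · have := congrArg (entry · i j) h.eq
    simp only [entry_ampl_mul, entry_mul_ampl] at this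
    exact this
  · rw [entry_ampl_mul, entry_mul_ampl]
    exact h i j

theorem ampl_mem_tensorB {A : VonNeumannAlgebra H} {x : H →L[ℂ] H} (hx : x ∈ A) :
    ampl H ι x ∈ tensorB (A : Set (H →L[ℂ] H)) ι := fun i j => by
  rw [entry_ampl]
  split_ifs
  exacts [hx, zero_mem A]

theorem matrixUnit_mem_tensorB (A : VonNeumannAlgebra H) (k l : ι) :
    (matrixUnit k l : l2 ι H →L[ℂ] l2 ι H) ∈ tensorB (A : Set (H →L[ℂ] H)) ι := fun i j => by
  rw [entry_matrixUnit]
  split_ifs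
  exacts [one_mem A, zero_mem A]

theorem centralizer_tensorB [Nonempty ι] (A : VonNeumannAlgebra H) :
    Set.centralizer (tensorB (A : Set (H →L[ℂ] H)) ι) = ampl H ι '' A.commutant := by
  ext T
  constructor
  · intro hT
    let i₀ : ι := Classical.arbitrary ι
    have hdiag (i j : ι) : entry T i j = if i = j then entry T i₀ i₀ else 0 :=
      entry_eq_of_commute_matrixUnit (hT _ (matrixUnit_mem_tensorB A j i₀)) i
    refine ⟨entry T i₀ i₀, VonNeumannAlgebra.mem_commutant_iff.2 fun x hx => ?_,
      ext_entry fun i j => by rw [entry_ampl, hdiag i j]⟩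
    exact commute_ampl_iff.1 (hT _ (ampl_mem_tensorB hx)) i₀ i₀
  · rintro ⟨y, hy, rfl⟩ X hX
    refine (commute_ampl_iff.2 fun i j => ?_).symm
    exact (VonNeumannAlgebra.mem_commutant_iff.1 hy _ (hX i j)).symm

theorem tensorB_eq_centralizer (A : VonNeumannAlgebra H) :
    tensorB (A : Set (H →L[ℂ] H)) ι = Set.centralizer (ampl H ι '' A.commutant) := by
  ext T
  constructor
  · rintro hT _ ⟨y, hy, rfl⟩
    exact commute_ampl_iff.2 fun i j =>
      (VonNeumannAlgebra.mem_commutant_iff.1 hy _ (hT i j)).symm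
  · intro hT i j
    rw [← VonNeumannAlgebra.commutant_commutant A]
    exact VonNeumannAlgebra.mem_commutant_iff.2 fun y hy =>
      commute_ampl_iff.1 (hT _ ⟨y, hy, rfl⟩) i j

end Amplification

end VNPaper

open VNPaper

variable {H : Type*} [NormedAddCommGroup H] [InnerProductSpace ℂ H] [CompleteSpace H]

theorem completelySingular_of_aut_fix_general
    (M N : VonNeumannAlgebra H)
    (haut : ∀ θ : N.commutant.toStarSubalgebra ≃⋆ₐ[ℂ] N.commutant.toStarSubalgebra,
      (∀ x : N.commutant.toStarSubalgebra,
        (x : H →L[ℂ] H) ∈ M.commutant → ((θ x : H →L[ℂ] H) = x)) →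
      ∀ x : N.commutant.toStarSubalgebra, ((θ x : H →L[ℂ] H) = x)) :
    CompletelySingularIn (N : Set (H →L[ℂ] H)) (M : Set (H →L[ℂ] H)) := by
  intro ι U hUM hU hUN
  rcases isEmpty_or_nonempty ι with hι | hι
  · exact fun i => isEmptyElim i
  let u : unitary (l2 ι H →L[ℂ] l2 ι H) := ⟨U, Unitary.mem_iff.2 ⟨hU.2, hU.1⟩⟩
  let σ := Unitary.conjStarAlgAut ℂ _ u
  let φ := (ampl H ι).comp N.commutant.toStarSubalgebra.subtype
  have hφ : (φ.range : Set _) = ampl H ι '' N.commutant := by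
    ext T
    exact ⟨fun ⟨y, hy⟩ => ⟨y, y.2, hy⟩, fun ⟨y, hy, h⟩ => ⟨⟨y, hy⟩, h⟩⟩
  obtain ⟨θ, hθ⟩ := StarAlgEquiv.exists_lift_of_range_invariant φ
    (ampl_injective.comp Subtype.val_injective) σ fun T => by
      rw [← SetLike.mem_coe, ← SetLike.mem_coe, hφ, ← centralizer_tensorB]
      exact Set.apply_mem_centralizer_iff σ hUN
  rw [tensorB_eq_centralizer] at hUM ⊢
  have hfix (x : N.commutant.toStarSubalgebra) (hx : (x : H →L[ℂ] H) ∈ M.commutant) :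
      (θ x : H →L[ℂ] H) = x :=
    ampl_injective <| (hθ x).trans <|
      (Unitary.conjStarAlgAut_apply_eq_self_iff u _).2 (hUM _ ⟨x, hx, rfl⟩).symm
  rintro _ ⟨y, hy, rfl⟩
  have hσy : σ (ampl H ι y) = ampl H ι y := by
    simpa [φ, haut θ hfix ⟨y, hy⟩] using (hθ ⟨y, hy⟩).symm
  exact ((Unitary.conjStarAlgAut_apply_eq_self_iff u _).1 hσy).symm

/-- If every automorphism of `N'` fixing `M'` pointwise is the identity on `N'`, then `N` is
completely singular in `M` (no separability needed). -/
theorem completelySingular_of_aut_fix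
    (M N : VonNeumannAlgebra H) (hNM : (N : Set (H →L[ℂ] H)) ⊆ M)
    (haut : ∀ θ : N.commutant.toStarSubalgebra ≃⋆ₐ[ℂ] N.commutant.toStarSubalgebra,
      (∀ x : N.commutant.toStarSubalgebra,
        (x : H →L[ℂ] H) ∈ M.commutant → ((θ x : H →L[ℂ] H) = x)) →
      ∀ x : N.commutant.toStarSubalgebra, ((θ x : H →L[ℂ] H) = x)) :
    CompletelySingularIn (N : Set (H →L[ℂ] H)) (M : Set (H →L[ℂ] H)) :=
  completelySingular_of_aut_fix_general M N haut
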